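/- The mutual exclusion implementation L(M) (Algorithm 1), built from any strictly serializable strongly progressive TM implementation M, satisfies the mutual-exclusion property: after any execution of L(M), at most one process is in the critical section. -/

import Mathlib

/-!
A formal model of the mutual exclusion implementation `L(M)` (Algorithm 1 of
Kuznetsov & Ravi, "Progressive Transactional Memory in Time and Space"), built
from a strictly serializable, strongly progressive TM implementation `M` that
accesses the single t-object `X`.

Since `M` is strictly serializable and strongly progressive and every
transaction of `L(M)` accesses only the single t-object `X`, each committed
transaction of `M` takes effect as one atomic step that reads the previous
value of `X` and writes the identity `[p_i, face_i]` to `X`, whereas an aborted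
transaction has no effect (the process retries the while loop).  The model
below represents this: the step `transSuccess` is a committed transaction of
the TM `M` (returning the previous value of `X`) and `transAbort` is an aborted
one.  Everything else of Algorithm 1 (the registers `Done`, `Succ`, `Lock` and
the control flow of the `Entry` and `Exit` operations) is modelled faithfully,
one line per step.

A process is *in the critical section* when its Enter operation has returned
`ok` and it has not yet invoked Exit, i.e., its program counter is `crit`.
-/

/-- Program locations of a process executing Algorithm 1. -/
inductive Loc : Type where
  | idle        -- outside Entry/Exit (remainder section)
  | entry1      -- about to write Done[p, face] := false
  | entry2      -- about to write Succ[p, face] := ⊥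
  | trans       -- in the while loop executing the transaction func() on M
  | lockPred    -- about to write Lock[p][prev.pid] := locked
  | setSucc     -- about to write Succ[prev] := p
  | checkDone   -- about to read Done[prev]
  | spin        -- spinning on Lock[p][prev.pid]
  | crit        -- in the critical section (Enter returned ok)
  | exit1       -- Exit invoked; about to write Done[p, face] := true
  | exit2       -- about to write Lock[Succ[p, face]][p] := unlocked
deriving DecidableEq

/-- A configuration of `L(M)` for `n` processes: the control state and local
variables of each process, and the values of the shared objects (`X`, `Done`,
`Succ`, `Lock`).  `lock p q = true` means the register `Lock[p][q]` is
`locked`. -/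
structure Conf (n : ℕ) where
  pc : Fin n → Loc
  face : Fin n → Bool
  prev : Fin n → Option (Fin n × Bool)
  X : Option (Fin n × Bool)
  done : Fin n → Bool → Bool
  succ : Fin n → Bool → Option (Fin n)
  lock : Fin n → Fin n → Bool

/-- The initial configuration. -/
def initConf (n : ℕ) : Conf n :=
  { pc := fun _ => Loc.idle
    face := fun _ => false
    prev := fun _ => none
    X := none
    done := fun _ _ => false
    succ := fun _ _ => none
    lock := fun _ _ => false }

/-- One step of process `p` in `L(M)`. -/
inductive MStep (n : ℕ) : Fin n → Conf n → Conf n → Prop where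
  /-- `p` invokes Enter: it adopts a new identity `face_p := 1 − face_p`. -/
  | invokeEnter (c : Conf n) (p : Fin n) :
      c.pc p = Loc.idle →
      MStep n p c { c with pc := Function.update c.pc p Loc.entry1,
                           face := Function.update c.face p (!c.face p) }
  /-- no-op step of an idle process (remainder section). -/
  | idleSkip (c : Conf n) (p : Fin n) :
      c.pc p = Loc.idle → MStep n p c c
  /-- Entry line 2: `Done[p, face_p].write(false)`. -/
  | doneWrite (c : Conf n) (p : Fin n) :
      c.pc p = Loc.entry1 →
      MStep n p c { c with pc := Function.update c.pc p Loc.entry2,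
                           done := Function.update c.done p
                             (Function.update (c.done p) (c.face p) false) }
  /-- Entry line 3: `Succ[p, face_p].write(⊥)`. -/
  | succInit (c : Conf n) (p : Fin n) :
      c.pc p = Loc.entry2 →
      MStep n p c { c with pc := Function.update c.pc p Loc.trans,
                           succ := Function.update c.succ p
                             (Function.update (c.succ p) (c.face p) none) }
  /-- The transaction `func()` on `M` aborts (returns `false`); `p` retries. -/
  | transAbort (c : Conf n) (p : Fin n) :
      c.pc p = Loc.trans → MStep n p c c
  /-- The transaction `func()` on `M` commits: atomically `prev_p := X;
  X := [p, face_p]`.  If `prev_p = ⊥`, `p` enters the critical section. -/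
  | transSuccess (c : Conf n) (p : Fin n) :
      c.pc p = Loc.trans →
      MStep n p c { c with
        pc := Function.update c.pc p (if c.X = none then Loc.crit else Loc.lockPred),
        prev := Function.update c.prev p c.X,
        X := some (p, c.face p) }
  /-- `Lock[p][prev.pid].write(locked)`. -/
  | lockWrite (c : Conf n) (p q : Fin n) (f : Bool) :
      c.pc p = Loc.lockPred → c.prev p = some (q, f) →
      MStep n p c { c with pc := Function.update c.pc p Loc.setSucc,
                           lock := Function.update c.lock p
                             (Function.update (c.lock p) q true) }
  /-- `Succ[prev].write(p)`. -/
  | succWrite (c : Conf n) (p q : Fin n) (f : Bool) :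
      c.pc p = Loc.setSucc → c.prev p = some (q, f) →
      MStep n p c { c with pc := Function.update c.pc p Loc.checkDone,
                           succ := Function.update c.succ q
                             (Function.update (c.succ q) f (some p)) }
  /-- read `Done[prev] = true`: `p` enters the critical section. -/
  | doneCheckTrue (c : Conf n) (p q : Fin n) (f : Bool) :
      c.pc p = Loc.checkDone → c.prev p = some (q, f) → c.done q f = true →
      MStep n p c { c with pc := Function.update c.pc p Loc.crit }
  /-- read `Done[prev] = false`: `p` spins on `Lock[p][prev.pid]`. -/
  | doneCheckFalse (c : Conf n) (p q : Fin n) (f : Bool) :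
      c.pc p = Loc.checkDone → c.prev p = some (q, f) → c.done q f = false →
      MStep n p c { c with pc := Function.update c.pc p Loc.spin }
  /-- spin: `Lock[p][prev.pid]` is still `locked`. -/
  | spinLocked (c : Conf n) (p q : Fin n) (f : Bool) :
      c.pc p = Loc.spin → c.prev p = some (q, f) → c.lock p q = true →
      MStep n p c c
  /-- spin: `Lock[p][prev.pid]` is `unlocked`; `p` enters the critical section. -/
  | spinUnlocked (c : Conf n) (p q : Fin n) (f : Bool) :
      c.pc p = Loc.spin → c.prev p = some (q, f) → c.lock p q = false →
      MStep n p c { c with pc := Function.update c.pc p Loc.crit }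
  /-- no-op step of a process inside the critical section. -/
  | critSkip (c : Conf n) (p : Fin n) :
      c.pc p = Loc.crit → MStep n p c c
  /-- `p` invokes Exit. -/
  | invokeExit (c : Conf n) (p : Fin n) :
      c.pc p = Loc.crit →
      MStep n p c { c with pc := Function.update c.pc p Loc.exit1 }
  /-- Exit line 1: `Done[p, face_p].write(true)`. -/
  | exitDone (c : Conf n) (p : Fin n) :
      c.pc p = Loc.exit1 →
      MStep n p c { c with pc := Function.update c.pc p Loc.exit2,
                           done := Function.update c.done p
                             (Function.update (c.done p) (c.face p) true) }
  /-- Exit line 2: `Lock[Succ[p, face_p]][p].write(unlocked)`; Exit returns. -/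
  | exitUnlockSome (c : Conf n) (p q : Fin n) :
      c.pc p = Loc.exit2 → c.succ p (c.face p) = some q →
      MStep n p c { c with pc := Function.update c.pc p Loc.idle,
                           lock := Function.update c.lock q
                             (Function.update (c.lock q) p false) }
  /-- Exit line 2 with no registered successor; Exit returns. -/
  | exitUnlockNone (c : Conf n) (p : Fin n) :
      c.pc p = Loc.exit2 → c.succ p (c.face p) = none →
      MStep n p c { c with pc := Function.update c.pc p Loc.idle }

/-- Configurations reachable in some execution of `L(M)`. -/
def Reachable (n : ℕ) (c : Conf n) : Prop :=
  Relation.ReflTransGen (fun a b => ∃ p, MStep n p a b) (initConf n) c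

/-- Process `p` is in the critical section: its Enter has returned `ok` and it
has not invoked Exit. -/
def inCS {n : ℕ} (c : Conf n) (p : Fin n) : Prop := c.pc p = Loc.crit

/-- An infinite execution of `L(M)`: at time `i` the scheduled process
`sched i` takes one step. -/
structure MRun (n : ℕ) where
  conf : ℕ → Conf n
  sched : ℕ → Fin n
  start : conf 0 = initConf n
  steps : ∀ i, MStep n (sched i) (conf i) (conf (i + 1))

/-- Every process takes infinitely many steps in `R`. -/
def fairRun {n : ℕ} (R : MRun n) : Prop :=
  ∀ p : Fin n, ∀ i, ∃ j, i ≤ j ∧ R.sched j = p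

/-- Process `p` invokes Enter at time `i` of the run `R`. -/
def enterInvokedAt {n : ℕ} (R : MRun n) (i : ℕ) (p : Fin n) : Prop :=
  R.sched i = p ∧ (R.conf i).pc p = Loc.idle ∧ (R.conf (i + 1)).pc p = Loc.entry1

/-- At time `i` the transaction `func()` of the scheduled process commits
(returns the previous value of `X` rather than aborting), terminating its
while loop. -/
def transSuccessAt {n : ℕ} (R : MRun n) (i : ℕ) : Prop :=
  (R.conf i).pc (R.sched i) = Loc.trans ∧
  (R.conf (i + 1)).pc (R.sched i) ≠ Loc.trans

/-- Formal counterpart, at the level of `L(M)`, of the hypothesis that the TM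
`M` is strongly progressive: whenever some process is executing the transaction
`func()` on the single t-object `X`, not all the concurrent transactions abort,
i.e., some process's transaction eventually commits. -/
def stronglyProgressiveRun {n : ℕ} (R : MRun n) : Prop :=
  ∀ i, (∃ p, (R.conf i).pc p = Loc.trans) → ∃ j, i ≤ j ∧ transSuccessAt R j

/-!
The processes that have committed their transaction but not yet completed the `Done` write of
Exit form a FIFO queue in commit order: each of them points through `prev` to the node of its
predecessor, and `X` holds the node of the last one. A waiting process may only pass when its
predecessor's `Done` flag is set or its `Lock` register is released; while the predecessor is still
queued neither happens. Hence only the head of the queue ever leaves the waiting loop, and every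
process in the critical section is the head of the queue.
-/

theorem List.IsChain.exists_rel_of_mem_tail {α : Type*} {R : α → α → Prop} {l : List α}
    (h : l.IsChain R) {b : α} (hb : b ∈ l.tail) : ∃ a ∈ l, R a b := by
  induction h with grind

namespace Loc

@[grind]
def IsEntering (l : Loc) : Prop := l = entry1 ∨ l = entry2 ∨ l = trans

/-- `Lock[p][prev.pid]` has been set to `locked` and not yet been read as `unlocked`. -/
@[grind]
def IsLocking (l : Loc) : Prop := l = setSucc ∨ l = checkDone ∨ l = spin

@[grind]
def IsWaiting (l : Loc) : Prop := l = lockPred ∨ l.IsLocking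

@[grind]
def IsQueued (l : Loc) : Prop := l.IsWaiting ∨ l = crit ∨ l = exit1

/-- The moves of a process that do not change any of the location classes above. -/
@[grind]
def IsSilentMove (l l' : Loc) : Prop :=
  l = entry2 ∧ l' = trans ∨ l = setSucc ∧ l' = checkDone ∨ l = checkDone ∧ l' = spin ∨
    l = crit ∧ l' = exit1

theorem IsWaiting.isQueued {l : Loc} (h : l.IsWaiting) : l.IsQueued := Or.inl h

end Loc

variable {n : ℕ}

/-- The node `(q, f)` has left the queue for good: `Done[q, f]` is set, and `q` cannot reset it
before its next pass through the critical section, which it cannot reach while another process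
still waits on `(q, f)`. -/
@[grind]
def Retired (c : Conf n) (q : Fin n) (f : Bool) : Prop :=
  c.done q f = true ∧
    (c.face q = f ∧ (c.pc q = .idle ∨ c.pc q = .exit2) ∨
      c.face q ≠ f ∧ ((c.pc q).IsEntering ∨ (c.pc q).IsWaiting))

/-- `L` lists the processes that have committed their transaction and not yet set `Done` in
Exit, in commit order. -/
structure QueueInv (c : Conf n) (L : List (Fin n)) : Prop where
  nodup : L.Nodup
  mem_iff : ∀ p, p ∈ L ↔ (c.pc p).IsQueued
  waiting_of_mem_tail : ∀ p ∈ L.tail, (c.pc p).IsWaiting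
  chain : L.IsChain (fun q p => c.prev p = some (q, c.face q))
  X_eq : ∀ p ∈ L.getLast?, c.X = some (p, c.face p)
  retired_X : L = [] → ∀ q f, c.X = some (q, f) → Retired c q f
  retired_prev : ∀ p ∈ L.head?, (c.pc p).IsWaiting → ∀ q f, c.prev p = some (q, f) →
    Retired c q f
  done_false : ∀ q, c.pc q ≠ .idle → c.pc q ≠ .entry1 → c.pc q ≠ .exit2 →
    c.done q (c.face q) = false
  done_true : ∀ q, c.pc q = .exit2 → c.done q (c.face q) = true
  locked : ∀ p q, (c.pc p).IsLocking → c.prev p = some (q, c.face q) →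
    (c.pc q).IsQueued ∨ c.pc q = .exit2 → c.lock p q = true

namespace QueueInv

variable {c : Conf n} {L : List (Fin n)} {p : Fin n}

theorem init : QueueInv (initConf n) [] where
  nodup := List.nodup_nil
  mem_iff _ := by simp [_root_.initConf, Loc.IsQueued, Loc.IsWaiting, Loc.IsLocking]
  waiting_of_mem_tail := by simp
  chain := List.IsChain.nil
  X_eq := by simp
  retired_X _ := by simp [_root_.initConf]
  retired_prev := by simp
  done_false _ := by simp [_root_.initConf]
  done_true _ := by simp [_root_.initConf]
  locked _ _ := by simp [_root_.initConf, Loc.IsLocking]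

theorem not_mem (h : QueueInv c L) (hp : ¬(c.pc p).IsQueued) : p ∉ L :=
  fun hmem => hp ((h.mem_iff p).1 hmem)

theorem head?_eq_of_not_waiting (h : QueueInv c L) (hq : (c.pc p).IsQueued)
    (hw : ¬(c.pc p).IsWaiting) : L.head? = some p := by
  have hmem := (h.mem_iff p).2 hq
  cases L with
  | nil => simp at hmem
  | cons a t => grind [h.waiting_of_mem_tail p]

theorem exists_prev_of_mem_tail (h : QueueInv c L) (hp : p ∈ L.tail) :
    ∃ q, (c.pc q).IsQueued ∧ c.prev p = some (q, c.face q) := by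
  obtain ⟨q, hq, hprev⟩ := h.chain.exists_rel_of_mem_tail hp
  exact ⟨q, (h.mem_iff q).1 hq, hprev⟩

theorem mem_head?_or_mem_tail (h : QueueInv c L) (hp : (c.pc p).IsQueued) :
    p ∈ L.head? ∨ p ∈ L.tail := by
  have := (h.mem_iff p).2 hp
  cases L <;> grind

theorem prev_ne_of_isEntering (h : QueueInv c L) {r q : Fin n} (hr : (c.pc r).IsWaiting)
    (hq : (c.pc q).IsEntering) : c.prev r ≠ some (q, c.face q) := by
  intro hprev
  rcases h.mem_head?_or_mem_tail hr.isQueued with hhead | htail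
  · have := h.retired_prev r hhead hr q _ hprev
    grind
  · obtain ⟨s, hs, hprev'⟩ := h.exists_prev_of_mem_tail htail
    grind

theorem head?_eq_of_done (h : QueueInv c L) {q : Fin n} {f : Bool} (hpc : c.pc p = .checkDone)
    (hprev : c.prev p = some (q, f)) (hd : c.done q f = true) : L.head? = some p := by
  rcases h.mem_head?_or_mem_tail (p := p) (by grind) with hhead | htail
  · exact hhead
  · obtain ⟨s, hs, hprev'⟩ := h.exists_prev_of_mem_tail htail
    have := h.done_false s
    grind

theorem head?_eq_of_unlocked (h : QueueInv c L) {q : Fin n} {f : Bool} (hpc : c.pc p = .spin)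
    (hprev : c.prev p = some (q, f)) (hl : c.lock p q = false) : L.head? = some p := by
  rcases h.mem_head?_or_mem_tail (p := p) (by grind) with hhead | htail
  · exact hhead
  · obtain ⟨s, hs, hprev'⟩ := h.exists_prev_of_mem_tail htail
    have := h.locked p s
    grind

theorem invokeEnter (h : QueueInv c L) (hpc : c.pc p = .idle) :
    QueueInv { c with pc := Function.update c.pc p .entry1,
                      face := Function.update c.face p (!c.face p) } L := by
  have hp : p ∉ L := h.not_mem (by grind)
  constructor <;> try simp only [Retired, Function.update_apply]
  · exact h.nodup
  · grind [h.mem_iff]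
  · grind [h.waiting_of_mem_tail, List.mem_of_mem_tail]
  · exact h.chain.imp_of_mem_imp (by grind)
  · grind [h.X_eq, List.mem_of_mem_getLast?]
  · intro hL q f hX; have := h.retired_X hL q f hX; grind
  · intro r hr hw q f hprev
    have hrp : r ≠ p := by grind [List.mem_of_mem_head?]
    have := h.retired_prev r hr (by grind) q f hprev
    grind
  · grind [h.done_false]
  · grind [h.done_true]
  · grind [h.locked]

theorem doneWrite (h : QueueInv c L) (hpc : c.pc p = .entry1) :
    QueueInv { c with pc := Function.update c.pc p .entry2,
                      done := Function.update c.done p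
                        (Function.update (c.done p) (c.face p) false) } L := by
  have hp : p ∉ L := h.not_mem (by grind)
  constructor <;> try simp only [Retired, Function.update_apply]
  · exact h.nodup
  · grind [h.mem_iff]
  · grind [h.waiting_of_mem_tail, List.mem_of_mem_tail]
  · exact h.chain
  · exact h.X_eq
  · intro hL q f hX; have := h.retired_X hL q f hX; grind
  · intro r hr hw q f hprev
    have hrp : r ≠ p := by grind [List.mem_of_mem_head?]
    have := h.retired_prev r hr (by grind) q f hprev
    grind
  · grind [h.done_false]
  · grind [h.done_true]
  · grind [h.locked]

theorem silentMove (h : QueueInv c L) {l : Loc} (hl : (c.pc p).IsSilentMove l)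
    (s : Fin n → Bool → Option (Fin n)) :
    QueueInv { c with pc := Function.update c.pc p l, succ := s } L := by
  constructor <;> try simp only [Retired, Function.update_apply]
  · exact h.nodup
  · grind [h.mem_iff]
  · intro r hr; have := h.waiting_of_mem_tail r hr; grind
  · exact h.chain
  · exact h.X_eq
  · intro hL q f hX; have := h.retired_X hL q f hX; grind
  · intro r hr hw q f hprev
    have := h.retired_prev r hr (by grind) q f hprev
    grind
  · grind [h.done_false]
  · grind [h.done_true]
  · grind [h.locked]

theorem enqueue_of_X_eq_none (h : QueueInv c L) (hpc : c.pc p = .trans) (hX : c.X = none) :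
    QueueInv { c with pc := Function.update c.pc p .crit,
                      prev := Function.update c.prev p c.X,
                      X := some (p, c.face p) } [p] := by
  have hL : L = [] := by
    cases L using List.reverseRecOn with
    | nil => rfl
    | append_singleton l a => simpa [hX] using h.X_eq a
  have hq : ∀ r, ¬(c.pc r).IsQueued := by simp [← h.mem_iff, hL]
  constructor <;> try simp only [Retired, Function.update_apply]
  · exact List.nodup_singleton p
  · grind [h.mem_iff]
  · simp
  · exact List.isChain_singleton p
  · simp
  · simp
  · grind
  · grind [h.done_false]
  · grind [h.done_true]
  · intro r q hr; have := hq r; grind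

theorem enqueue (h : QueueInv c L) (hpc : c.pc p = .trans) :
    QueueInv { c with pc := Function.update c.pc p .lockPred,
                      prev := Function.update c.prev p c.X,
                      X := some (p, c.face p) } (L ++ [p]) := by
  have hp : p ∉ L := h.not_mem (by grind)
  constructor <;> try simp only [Retired, Function.update_apply]
  · exact h.nodup.append (List.nodup_singleton p) (by simpa using hp)
  · grind [h.mem_iff]
  · intro r hr
    rcases eq_or_ne L [] with rfl | hL
    · simp at hr
    · rw [List.tail_append_of_ne_nil hL] at hr
      grind [h.waiting_of_mem_tail]
  · refine (h.chain.imp_of_mem_imp ?_).append (List.isChain_singleton p) ?_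
    · grind
    · grind [h.X_eq]
  · simp
  · simp
  · intro r hr hw q f hprev
    rcases eq_or_ne L [] with rfl | hL
    · have := h.retired_X rfl q f
      grind
    · rw [List.head?_append_of_ne_nil _ hL] at hr
      have := h.retired_prev r hr
      grind [List.mem_of_mem_head?]
  · grind [h.done_false]
  · grind [h.done_true]
  · intro r q hr hprev hq
    have := h.locked r q
    have := h.prev_ne_of_isEntering (r := r) (q := p)
    grind

theorem lockWrite (h : QueueInv c L) {q : Fin n} {f : Bool} (hpc : c.pc p = .lockPred)
    (hprev : c.prev p = some (q, f)) :
    QueueInv { c with pc := Function.update c.pc p .setSucc,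
                      lock := Function.update c.lock p
                        (Function.update (c.lock p) q true) } L := by
  constructor <;> try simp only [Retired, Function.update_apply]
  · exact h.nodup
  · grind [h.mem_iff]
  · grind [h.waiting_of_mem_tail]
  · exact h.chain
  · exact h.X_eq
  · intro hL r f hX; have := h.retired_X hL r f hX; grind
  · intro r hr hw q f hprev
    have := h.retired_prev r hr (by grind) q f hprev
    grind
  · grind [h.done_false]
  · grind [h.done_true]
  · grind [h.locked]

theorem enterCrit (h : QueueInv c L) (hhead : L.head? = some p) (hw : (c.pc p).IsWaiting) :
    QueueInv { c with pc := Function.update c.pc p .crit } L := by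
  obtain ⟨t, rfl⟩ := List.head?_eq_some_iff.1 hhead
  have hpt : p ∉ t := (List.nodup_cons.1 h.nodup).1
  constructor <;> try simp only [Retired, Function.update_apply]
  · exact h.nodup
  · grind [h.mem_iff]
  · grind [h.waiting_of_mem_tail]
  · exact h.chain
  · exact h.X_eq
  · simp
  · grind
  · grind [h.done_false]
  · grind [h.done_true]
  · grind [h.locked]

theorem exitDone (h : QueueInv c L) (hpc : c.pc p = .exit1) :
    QueueInv { c with pc := Function.update c.pc p .exit2,
                      done := Function.update c.done p
                        (Function.update (c.done p) (c.face p) true) } L.tail := by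
  obtain ⟨t, rfl⟩ :=
    List.head?_eq_some_iff.1 (h.head?_eq_of_not_waiting (p := p) (by grind) (by grind))
  have hpt : p ∉ t := (List.nodup_cons.1 h.nodup).1
  constructor <;> try simp only [Retired, Function.update_apply, List.tail_cons]
  · exact (List.nodup_cons.1 h.nodup).2
  · grind [h.mem_iff]
  · grind [h.waiting_of_mem_tail, List.mem_of_mem_tail]
  · exact h.chain.tail
  · grind [h.X_eq, List.getLast?_cons, List.mem_of_mem_getLast?]
  · intro ht q f hX
    have := h.X_eq p (by simp [ht])
    grind
  · intro r hr hw q f hprev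
    obtain ⟨u, rfl⟩ := List.head?_eq_some_iff.1 hr
    have := h.chain.rel
    grind
  · grind [h.done_false]
  · grind [h.done_true]
  · grind [h.locked]

theorem exitUnlock (h : QueueInv c L) (hpc : c.pc p = .exit2) {lk : Fin n → Fin n → Bool}
    (hlk : ∀ r s, s ≠ p → lk r s = c.lock r s) :
    QueueInv { c with pc := Function.update c.pc p .idle, lock := lk } L := by
  have hp : p ∉ L := h.not_mem (by grind)
  constructor <;> try simp only [Retired, Function.update_apply]
  · exact h.nodup
  · grind [h.mem_iff]
  · grind [h.waiting_of_mem_tail, List.mem_of_mem_tail]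
  · exact h.chain
  · exact h.X_eq
  · intro hL q f hX; have := h.retired_X hL q f hX; grind
  · intro r hr hw q f hprev
    have hrp : r ≠ p := by grind [List.mem_of_mem_head?]
    have := h.retired_prev r hr (by grind) q f hprev
    grind
  · grind [h.done_false]
  · grind [h.done_true]
  · grind [h.locked]

theorem head?_eq_of_inCS (h : QueueInv c L) (hp : inCS c p) : L.head? = some p :=
  h.head?_eq_of_not_waiting (by grind [inCS]) (by grind [inCS])

theorem step (h : QueueInv c L) {c' : Conf n} (hstep : MStep n p c c') :
    ∃ L', QueueInv c' L' := by
  cases hstep with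
  | idleSkip | transAbort | spinLocked | critSkip => exact ⟨L, h⟩
  | invokeEnter _ _ hpc => exact ⟨L, h.invokeEnter hpc⟩
  | doneWrite _ _ hpc => exact ⟨L, h.doneWrite hpc⟩
  | succInit _ _ hpc | succWrite _ _ _ _ hpc _ | doneCheckFalse _ _ _ _ hpc _ _
  | invokeExit _ _ hpc => exact ⟨L, h.silentMove (by grind) _⟩
  | transSuccess _ _ hpc =>
    by_cases hX : c.X = none
    · exact ⟨[p], by simpa only [hX, if_true] using h.enqueue_of_X_eq_none hpc hX⟩
    · exact ⟨L ++ [p], by simpa only [hX, if_false] using h.enqueue hpc⟩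
  | lockWrite _ _ _ _ hpc hprev => exact ⟨L, h.lockWrite hpc hprev⟩
  | doneCheckTrue _ _ _ _ hpc hprev hd =>
    exact ⟨L, h.enterCrit (h.head?_eq_of_done hpc hprev hd) (by grind)⟩
  | spinUnlocked _ _ _ _ hpc hprev hl =>
    exact ⟨L, h.enterCrit (h.head?_eq_of_unlocked hpc hprev hl) (by grind)⟩
  | exitDone _ _ hpc => exact ⟨L.tail, h.exitDone hpc⟩
  | exitUnlockSome _ _ q hpc _ =>
    exact ⟨L, h.exitUnlock hpc fun r _ hs => by by_cases hr : r = q <;> simp [hr, hs]⟩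
  | exitUnlockNone _ _ hpc _ => exact ⟨L, h.exitUnlock hpc (fun _ _ _ => rfl)⟩

end QueueInv

theorem Reachable.exists_queueInv {c : Conf n} (h : Reachable n c) : ∃ L, QueueInv c L := by
  induction h with
  | refl => exact ⟨[], QueueInv.init⟩
  | tail _ hstep ih =>
    obtain ⟨L, hL⟩ := ih
    obtain ⟨p, hp⟩ := hstep
    exact hL.step hp

theorem LM_mutual_exclusion (n : ℕ) (c : Conf n) (hreach : Reachable n c) :
    ∀ p q : Fin n, inCS c p → inCS c q → p = q := by
  intro p q hp hq
  obtain ⟨L, h⟩ := hreach.exists_queueInv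
  exact Option.some_injective _ ((h.head?_eq_of_inCS hp).symm.trans (h.head?_eq_of_inCS hq))
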